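/- arXiv:2205.14888 — 4 statements merged into one kernel-verified Lean document; each statement's English description precedes it below -/
import Mathlib

section
/- For integers s, k, n with 1 ≤ s ≤ k ≤ n−1 and n sufficiently large, the sum ∑_{i=s}^{k} 1/(i(n−i)+1) is at most (log k − log s + log(n−s+1) − log(n−k))/n + 3/n. -/
/-! Dropping the `+ 1` and splitting `1/(i(n-i)) = (1/i + 1/(n-i))/n` into partial fractions
turns the sum into two harmonic sums over `[s, k]` and `[n-k, n-s]`, each of which is at most
a difference of logarithms plus `1`. -/

open Finset Real

lemma sum_Icc_inv_le_log_sub_log_add_one {a b : ℕ} (ha : 1 ≤ a) (hab : a ≤ b) :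
    ∑ i ∈ Icc a b, (i : ℝ)⁻¹ ≤ log b - log a + 1 := by
  have hsplit := sum_Ico_consecutive (fun i : ℕ => (i : ℝ)⁻¹) ha (by omega : a ≤ b + 1)
  have hupper := harmonic_le_one_add_log b
  have hlower := log_add_one_le_harmonic (a - 1)
  simp only [harmonic_eq_sum_Icc, Rat.cast_sum, Rat.cast_inv, Rat.cast_natCast,
    ← Ico_add_one_right_eq_Icc, Nat.sub_add_cancel ha] at hupper hlower
  rw [← Ico_add_one_right_eq_Icc]
  linarith

lemma sum_Icc_comp_const_sub {M : Type*} [AddCommMonoid M] (f : ℕ → M) {s k n : ℕ}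
    (hs : s ≤ n) (hk : k ≤ n) :
    ∑ i ∈ Icc s k, f (n - i) = ∑ j ∈ Icc (n - k) (n - s), f j := by
  refine sum_nbij' (n - ·) (n - ·) ?_ ?_ ?_ ?_ fun _ _ => rfl <;>
    intro i hi <;> simp only [mem_Icc] at hi ⊢ <;> omega

lemma one_div_mul_sub_add_one_le {x n : ℝ} (hx : 0 < x) (hxn : x < n) :
    1 / (x * (n - x) + 1) ≤ (x⁻¹ + (n - x)⁻¹) / n := by
  have hnx : 0 < n - x := sub_pos.mpr hxn
  have hn : 0 < n := hx.trans hxn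
  calc 1 / (x * (n - x) + 1) ≤ 1 / (x * (n - x)) := by gcongr; linarith
    _ = (x⁻¹ + (n - x)⁻¹) / n := by field_simp; ring

open Real in
/-- For integers `1 ≤ s ≤ k ≤ n-1` and `n` sufficiently large,
`∑_{i=s}^{k} 1/(i(n-i)+1) ≤ (log k - log s + log(n-s+1) - log(n-k))/n + 3/n`. -/
theorem sum_one_div_upper_bound :
    ∃ N : ℕ, ∀ n ≥ N, ∀ s k : ℕ, 1 ≤ s → s ≤ k → k ≤ n - 1 →
      ∑ i ∈ Finset.Icc s k, (1 : ℝ) / (i * (n - i) + 1) ≤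
        (Real.log k - Real.log s + Real.log (n - s + 1) - Real.log (n - k)) / n + 3 / n := by
  refine ⟨0, fun n _ s k hs hsk hk => ?_⟩
  have hkn : k < n := by omega
  have hterm : ∀ i ∈ Icc s k,
      (1 : ℝ) / (i * (n - i) + 1) ≤ ((i : ℝ)⁻¹ + ((n - i : ℕ) : ℝ)⁻¹) / n := fun i hi => by
    rw [mem_Icc] at hi
    rw [Nat.cast_sub (by omega)]
    exact one_div_mul_sub_add_one_le (by norm_cast; omega) (by norm_cast; omega)
  have hleft := sum_Icc_inv_le_log_sub_log_add_one hs hsk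
  have hright :=
    sum_Icc_inv_le_log_sub_log_add_one (a := n - k) (b := n - s) (by omega) (by omega)
  rw [Nat.cast_sub (by omega), Nat.cast_sub (by omega)] at hright
  have hlog : log (n - s) ≤ log (n - s + 1) :=
    log_le_log (by rw [sub_pos]; norm_cast; omega) (by linarith)
  calc ∑ i ∈ Icc s k, (1 : ℝ) / (i * (n - i) + 1)
      ≤ ∑ i ∈ Icc s k, ((i : ℝ)⁻¹ + ((n - i : ℕ) : ℝ)⁻¹) / n := sum_le_sum hterm
    _ = ((∑ i ∈ Icc s k, (i : ℝ)⁻¹) + ∑ j ∈ Icc (n - k) (n - s), (j : ℝ)⁻¹) / n := by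
      rw [← sum_div, sum_add_distrib,
        sum_Icc_comp_const_sub (fun j => (j : ℝ)⁻¹) (by omega) (by omega)]
    _ ≤ (log k - log s + log (n - s + 1) - log (n - k)) / n + 3 / n := by
      rw [← add_div]
      gcongr ?_ / _
      linarith
end

section
/- For integers s, k, n with 1 ≤ s ≤ k ≤ n−1, the sum ∑_{i=s}^{k} 1/(i(n−i)+1) is at least (log k − log s + log(n−s+1) − log(n−k))/n − 3/n. -/
/-!
Termwise, `1 / (x(m - x) + 1) ≥ (1 / (x + 1) + 1 / (m + 1 - x)) / m`. Each of the two resulting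
sums dominates a telescoping sum of logarithms, because `log (y + 1) - log y ≤ 1 / y`; shifting
the arguments of the logarithms back by one costs at most `1` each.
-/

open Real Finset

lemma log_add_one_sub_log_le_inv {y : ℝ} (hy : 0 < y) : log (y + 1) - log y ≤ y⁻¹ := by
  rw [← log_div (by positivity) hy.ne']
  calc log ((y + 1) / y) ≤ (y + 1) / y - 1 := log_le_sub_one_of_pos (by positivity)
    _ = y⁻¹ := by field_simp; ring

lemma log_add_one_le_log_add_one_of_one_le {y : ℝ} (hy : 1 ≤ y) : log (y + 1) ≤ log y + 1 := by
  have := log_add_one_sub_log_le_inv (zero_lt_one.trans_le hy)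
  linarith [inv_le_one_of_one_le₀ hy]

lemma log_sub_log_le_sum_inv_add {a : ℝ} {s k : ℕ} (hs : 0 < s + a) (hsk : s ≤ k) :
    log (k + 1 + a) - log (s + a) ≤ ∑ i ∈ Icc s k, ((i : ℝ) + a)⁻¹ := by
  have htel := sum_Icc_sub hsk fun i : ℕ ↦ log (i + a)
  push_cast at htel
  rw [← htel]
  refine sum_le_sum fun i hi ↦ ?_
  have hi : 0 < (i : ℝ) + a := hs.trans_le (by gcongr; exact_mod_cast (mem_Icc.1 hi).1)
  simpa only [add_right_comm] using log_add_one_sub_log_le_inv hi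

lemma log_sub_log_le_sum_inv_sub {b : ℝ} {s k : ℕ} (hk : k < b) (hsk : s ≤ k) :
    log (b - s + 1) - log (b - k) ≤ ∑ i ∈ Icc s k, (b - i)⁻¹ := by
  have htel := sum_Icc_sub hsk fun i : ℕ ↦ -log (b - i + 1)
  push_cast at htel
  rw [show log (b - s + 1) - log (b - k) = -log (b - (k + 1) + 1) - -log (b - s + 1) by ring_nf,
    ← htel]
  refine sum_le_sum fun i hi ↦ ?_
  have hi : 0 < b - i := sub_pos.2 (lt_of_le_of_lt (by exact_mod_cast (mem_Icc.1 hi).2) hk)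
  rw [show b - (i + 1) + 1 = b - i by ring]
  linarith [log_add_one_sub_log_le_inv hi]

/-- Since `(x + 1)(m + 1 - x) = x(m - x) + m + 1`, this reduces to `2x(m - x) + 2 ≤ m²`. -/
lemma inv_add_inv_div_le_one_div_mul_sub_add_one {x m : ℝ} (hx : 0 ≤ x) (hxm : x ≤ m)
    (hm : 2 ≤ m) : ((x + 1)⁻¹ + (m + 1 - x)⁻¹) / m ≤ 1 / (x * (m - x) + 1) := by
  have hx1 : 0 < x + 1 := by linarith
  have hmx1 : 0 < m + 1 - x := by linarith
  have hmx : 0 ≤ m - x := sub_nonneg.2 hxm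
  rw [inv_add_inv hx1.ne' hmx1.ne', div_div,
    div_le_div_iff₀ (mul_pos (mul_pos hx1 hmx1) (by linarith)) (by positivity)]
  nlinarith [sq_nonneg (m - 2 * x)]

/-- For integers `1 ≤ s ≤ k ≤ n-1`,
`∑_{i=s}^{k} 1/(i(n-i)+1) ≥ (log k - log s + log(n-s+1) - log(n-k))/n - 3/n`. -/
theorem sum_one_div_lower_bound (n s k : ℕ) (hs : 1 ≤ s) (hsk : s ≤ k) (hk : k ≤ n - 1) :
    (Real.log k - Real.log s + Real.log (n - s + 1) - Real.log (n - k)) / n - 3 / n ≤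
      ∑ i ∈ Finset.Icc s k, (1 : ℝ) / (i * (n - i) + 1) := by
  have hs' : (1 : ℝ) ≤ s := by exact_mod_cast hs
  have hsk' : (s : ℝ) ≤ k := by exact_mod_cast hsk
  have hkn : (k : ℝ) + 1 ≤ n := by exact_mod_cast (by omega : k + 1 ≤ n)
  calc (log k - log s + log (n - s + 1) - log (n - k)) / n - 3 / n
      ≤ ((log (k + 1 + 1) - log (s + 1)) + (log (n + 1 - s + 1) - log (n + 1 - k))) / n := by
        rw [div_sub_div_same]
        gcongr
        have hs1 := log_add_one_le_log_add_one_of_one_le hs'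
        have hk1 := log_add_one_le_log_add_one_of_one_le (le_sub_iff_add_le'.2 hkn)
        rw [sub_add_eq_add_sub] at hk1
        have hk2 := log_le_log (by linarith) (by linarith : (k : ℝ) ≤ k + 1 + 1)
        have hs2 := log_le_log (by linarith) (by linarith : (n : ℝ) - s + 1 ≤ n + 1 - s + 1)
        linarith
    _ ≤ (∑ i ∈ Icc s k, ((i : ℝ) + 1)⁻¹ + ∑ i ∈ Icc s k, ((n : ℝ) + 1 - i)⁻¹) / n := by
        gcongr
        · exact log_sub_log_le_sum_inv_add (by positivity) hsk
        · exact log_sub_log_le_sum_inv_sub (by linarith) hsk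
    _ = ∑ i ∈ Icc s k, (((i : ℝ) + 1)⁻¹ + ((n : ℝ) + 1 - i)⁻¹) / n := by
        rw [← sum_add_distrib, sum_div]
    _ ≤ ∑ i ∈ Icc s k, (1 : ℝ) / (i * (n - i) + 1) := by
        refine sum_le_sum fun i hi ↦ inv_add_inv_div_le_one_div_mul_sub_add_one
          (Nat.cast_nonneg i) ?_ (by linarith)
        exact_mod_cast (mem_Icc.1 hi).2.trans (by omega)
end

section
/- In a simple temporal graph, the temporal subgraph output by the Foremost Forest algorithm on input (𝒢, S) is a foremost forest for S: for every vertex v in the output reachable from S, the unique temporal path from S to v in the output forest is a foremost (earliest-arrival) temporal (S,v)-path in 𝒢, and the vertex set of the output is exactly the set of vertices reachable from S in 𝒢. -/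
/-- A list of vertices is a temporal path if consecutive vertices are adjacent and
the labels of consecutive edges are strictly increasing. -/
def IsTPath {V : Type*} (adj : V → V → Prop) (lab : V → V → ℝ) (p : List V) : Prop :=
  p ≠ [] ∧ p.Chain' adj ∧
    ∀ i : ℕ, ∀ h : i + 2 < p.length,
      lab (p.get ⟨i, by omega⟩) (p.get ⟨i + 1, by omega⟩) <
        lab (p.get ⟨i + 1, by omega⟩) (p.get ⟨i + 2, by omega⟩)

/-- The arrival time of a temporal path (of length at least 2): the label of its
last edge (junk value `0` for shorter lists). -/
def arrivalTime {V : Type*} (lab : V → V → ℝ) (p : List V) : ℝ :=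
  match p.reverse with
  | a :: b :: _ => lab b a
  | _ => 0

/-- A vertex `v` is temporally reachable from the set `S` if `v ∈ S` or some
temporal path starts in `S` and ends at `v`. -/
def ReachesFrom {V : Type*} (adj : V → V → Prop) (lab : V → V → ℝ)
    (S : Finset V) (v : V) : Prop :=
  v ∈ S ∨ ∃ p : List V, ∃ hp : p ≠ [],
    IsTPath adj lab p ∧ 2 ≤ p.length ∧ p.head hp ∈ S ∧ p.getLast hp = v


/-! Each vertex added at step `i` is reached along forest edges of increasing labels, which is a
temporal path from `S` arriving at time `lab (e i)`. Conversely, by strong induction on `i`, a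
temporal path from `S` to a vertex outside the forest after `i` steps must leave the forest
along some edge `uv`. If `u ∉ S`, then `u = (e j).2` for some `j < i`, and the prefix of the
path ending at `u` arrives, by induction, no earlier than `lab (e j)`; hence
`lab (e j) < lab u v`, so `uv` was a valid extension edge at step `i` and minimality gives
`lab (e i) ≤ lab u v`, which is at most the arrival time of the path. At termination the same
crossing edge would be a valid extension edge, so every reachable vertex lies in the final
forest. -/

def IsTPathFromTo {V : Type*} (adj : V → V → Prop) (lab : V → V → ℝ) (S : Set V) (v : V)
    (p : List V) : Prop :=
  ∃ hp : p ≠ [], IsTPath adj lab p ∧ 2 ≤ p.length ∧ p.head hp ∈ S ∧ p.getLast hp = v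

theorem List.exists_getElem_mem_getElem_succ_notMem {α : Type*} {A : Set α} {l : List α}
    (hne : l ≠ []) (hhead : l.head hne ∈ A) (hlast : l.getLast hne ∉ A) :
    ∃ i, ∃ h : i + 1 < l.length, l[i] ∈ A ∧ l[i + 1] ∉ A := by
  by_contra! hcon
  exact hlast <| (isChain_iff_getElem.2 hcon).induction (· ∈ A) l (fun _ _ h => h)
    (fun _ => hhead) _ (getLast_mem hne)

section TemporalPath

variable {V : Type*} {adj : V → V → Prop} {lab : V → V → ℝ} {S A : Set V} {u v w : V}
  {p : List V}

theorem IsTPath.adj_getElem (hp : IsTPath adj lab p) {i : ℕ} (h : i + 1 < p.length) :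
    adj p[i] p[i + 1] :=
  hp.2.1.getElem i h

theorem IsTPath.lab_lt_lab (hp : IsTPath adj lab p) {i : ℕ} (h : i + 2 < p.length) :
    lab p[i] p[i + 1] < lab p[i + 1] p[i + 2] := by
  simpa only [List.get_eq_getElem] using hp.2.2 i h

theorem IsTPath.lab_le_lab (hp : IsTPath adj lab p) {i j : ℕ} (hij : i ≤ j)
    (hj : j + 1 < p.length) : lab p[i] p[i + 1] ≤ lab p[j] p[j + 1] := by
  induction j, hij using Nat.le_induction with
  | base => rfl
  | succ j _ ih => exact (ih (by omega)).trans (hp.lab_lt_lab hj).le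

theorem arrivalTime_append_pair (l : List V) (a b : V) :
    arrivalTime lab (l ++ [a, b]) = lab a b := by
  simp [arrivalTime]

theorem arrivalTime_eq_getElem {n : ℕ} (h : p.length = n + 2) :
    arrivalTime lab p = lab p[n] p[n + 1] := by
  have hp : p = p.take n ++ [p[n], p[n + 1]] := by
    conv_lhs => rw [← List.take_append_drop n p]
    rw [List.drop_eq_getElem_cons (by omega), List.drop_eq_getElem_cons (by omega),
      List.drop_eq_nil_of_le (by omega)]
  conv_lhs => rw [hp]
  exact arrivalTime_append_pair _ _ _

theorem IsTPathFromTo.isTPath (hp : IsTPathFromTo adj lab S w p) : IsTPath adj lab p :=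
  hp.2.1

theorem isTPathFromTo_pair (hu : u ∈ S) (huv : adj u v) : IsTPathFromTo adj lab S v [u, v] :=
  ⟨List.cons_ne_nil _ _,
    ⟨List.cons_ne_nil _ _, List.isChain_pair.2 huv, fun _ hi => absurd hi (by simp)⟩,
    le_rfl, hu, rfl⟩

theorem IsTPathFromTo.concat (hp : IsTPathFromTo adj lab S u p) (huv : adj u v)
    (hlt : arrivalTime lab p < lab u v) : IsTPathFromTo adj lab S v (p ++ [v]) := by
  obtain ⟨hne, hT, hlen, hhead, rfl⟩ := hp
  have hchain : (p ++ [v]).IsChain adj :=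
    hT.2.1.append (.singleton v) (by simpa [List.getLast?_eq_some_getLast hne])
  refine ⟨by simp, ⟨by simp, hchain, fun i hi => ?_⟩, by simp; omega,
    by rwa [List.head_append_of_ne_nil], List.getLast_concat ..⟩
  simp only [List.length_append, List.length_singleton] at hi
  simp only [List.get_eq_getElem]
  rcases (by omega : i + 2 < p.length ∨ i + 2 = p.length) with h | h
  · simp only [List.getElem_append_left (by omega : i < p.length),
      List.getElem_append_left (by omega : i + 1 < p.length), List.getElem_append_left h]
    exact hT.lab_lt_lab h
  · have hlast : p.getLast hne = p[i + 1] := by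
      rw [List.getLast_eq_getElem]; congr 1; omega
    rw [arrivalTime_eq_getElem h.symm, hlast] at hlt
    rw [List.getElem_append_left (by omega : i < p.length),
      List.getElem_append_left (by omega : i + 1 < p.length),
      List.getElem_append_right (by omega : p.length ≤ i + 2)]
    simpa [← h] using hlt

theorem IsTPathFromTo.arrivalTime_concat (hp : IsTPathFromTo adj lab S u p) (v : V) :
    arrivalTime lab (p ++ [v]) = lab u v := by
  obtain ⟨hne, -, -, -, rfl⟩ := hp
  conv_lhs => rw [← List.dropLast_append_getLast hne, List.append_assoc]
  exact arrivalTime_append_pair _ _ _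

theorem IsTPathFromTo.take (hp : IsTPathFromTo adj lab S w p) {n : ℕ} (hn : n + 1 < p.length) :
    IsTPathFromTo adj lab S p[n + 1] (p.take (n + 2)) := by
  obtain ⟨hne, hT, -, hhead, rfl⟩ := hp
  have hlen : (p.take (n + 2)).length = n + 2 := by simp; omega
  refine ⟨by simp [hne], ⟨by simp [hne], hT.2.1.take _, fun i hi => ?_⟩, by omega,
    by rwa [List.head_take],
    by simp [List.getLast_take, List.getElem?_eq_getElem hn]⟩
  simpa only [List.get_eq_getElem, List.getElem_take] using hT.lab_lt_lab (by omega)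

theorem arrivalTime_take {n : ℕ} (hn : n + 1 < p.length) :
    arrivalTime lab (p.take (n + 2)) = lab p[n] p[n + 1] := by
  rw [arrivalTime_eq_getElem (n := n) (by simp; omega)]
  simp only [List.getElem_take]

theorem IsTPathFromTo.getElem_zero_mem (hp : IsTPathFromTo adj lab S w p) (h : 0 < p.length) :
    p[0] ∈ S := by
  obtain ⟨hne, -, -, hhead, -⟩ := hp
  rwa [List.head_eq_getElem] at hhead

theorem IsTPathFromTo.lab_le_arrivalTime (hp : IsTPathFromTo adj lab S w p) {m : ℕ}
    (hm : m + 1 < p.length) : lab p[m] p[m + 1] ≤ arrivalTime lab p := by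
  obtain ⟨-, hT, hlen, -⟩ := hp
  rw [arrivalTime_eq_getElem (n := p.length - 2) (by omega)]
  exact hT.lab_le_lab (by omega) _

theorem IsTPathFromTo.exists_crossing (hp : IsTPathFromTo adj lab S w p) (hSA : S ⊆ A)
    (hw : w ∉ A) : ∃ m, ∃ hm : m + 1 < p.length, p[m] ∈ A ∧ p[m + 1] ∉ A := by
  obtain ⟨hne, -, -, hhead, rfl⟩ := hp
  exact List.exists_getElem_mem_getElem_succ_notMem hne (hSA hhead) hw

end TemporalPath

section ForemostForest

variable {V : Type*} {adj : V → V → Prop} {lab : V → V → ℝ} {S : Set V} {k : ℕ}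
  {e : Fin k → V × V}

def forestVertices (S : Set V) (e : Fin k → V × V) (N : ℕ) : Set V :=
  S ∪ {v | ∃ i : Fin k, (i : ℕ) < N ∧ (e i).2 = v}

theorem subset_forestVertices {N : ℕ} : S ⊆ forestVertices S e N :=
  Set.subset_union_left

def IsExtensionEdge (adj : V → V → Prop) (lab : V → V → ℝ) (S : Set V)
    (e : Fin k → V × V) (N : ℕ) (u v : V) : Prop :=
  u ∈ forestVertices S e N ∧ v ∉ forestVertices S e N ∧ adj u v ∧
    (u ∈ S ∨ ∃ j : Fin k, (j : ℕ) < N ∧ (e j).2 = u ∧ lab (e j).1 (e j).2 < lab u v)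

structure IsForemostForestRun (adj : V → V → Prop) (lab : V → V → ℝ) (S : Set V)
    (e : Fin k → V × V) : Prop where
  isExtensionEdge : ∀ i : Fin k, IsExtensionEdge adj lab S e i (e i).1 (e i).2
  lab_le : ∀ (i : Fin k) (u v : V), IsExtensionEdge adj lab S e i u v →
    lab (e i).1 (e i).2 ≤ lab u v
  not_isExtensionEdge : ∀ u v : V, ¬ IsExtensionEdge adj lab S e k u v

namespace IsForemostForestRun

theorem exists_isTPathFromTo (run : IsForemostForestRun adj lab S e) (i : Fin k) :
    ∃ p, IsTPathFromTo adj lab S (e i).2 p ∧ arrivalTime lab p = lab (e i).1 (e i).2 := by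
  induction i using WellFoundedLT.induction with
  | ind i ih =>
  obtain ⟨-, -, hadj, hS | ⟨j, hji, hj, hlt⟩⟩ := run.isExtensionEdge i
  · exact ⟨_, isTPathFromTo_pair hS hadj, rfl⟩
  · obtain ⟨p, hp, harr⟩ := ih j hji
    rw [hj] at hp
    rw [← harr] at hlt
    exact ⟨_, hp.concat hadj hlt, hp.arrivalTime_concat _⟩

theorem isExtensionEdge_of_crossing (run : IsForemostForestRun adj lab S e) {N : ℕ}
    (hopt : ∀ j : Fin k, (j : ℕ) < N → ∀ w q, IsTPathFromTo adj lab S w q →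
      w ∉ forestVertices S e j → lab (e j).1 (e j).2 ≤ arrivalTime lab q)
    {w : V} {p : List V} (hp : IsTPathFromTo adj lab S w p) {m : ℕ} (hm : m + 1 < p.length)
    (hin : p[m] ∈ forestVertices S e N) (hout : p[m + 1] ∉ forestVertices S e N) :
    IsExtensionEdge adj lab S e N p[m] p[m + 1] := by
  refine ⟨hin, hout, hp.isTPath.adj_getElem hm, ?_⟩
  obtain _ | n := m
  · exact .inl (hp.getElem_zero_mem _)
  rcases hin with hS | ⟨j, hjN, hj⟩
  · exact .inl hS
  refine .inr ⟨j, hjN, hj, ?_⟩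
  calc lab (e j).1 (e j).2 ≤ arrivalTime lab (p.take (n + 2)) :=
        hopt j hjN _ _ (hp.take (by omega)) (hj ▸ (run.isExtensionEdge j).2.1)
    _ = lab p[n] p[n + 1] := arrivalTime_take _
    _ < lab p[n + 1] p[n + 2] := hp.isTPath.lab_lt_lab hm

theorem lab_le_arrivalTime (run : IsForemostForestRun adj lab S e) (i : Fin k) {w : V}
    {p : List V} (hp : IsTPathFromTo adj lab S w p) (hw : w ∉ forestVertices S e i) :
    lab (e i).1 (e i).2 ≤ arrivalTime lab p := by
  induction i using WellFoundedLT.induction generalizing w p with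
  | ind i ih =>
  obtain ⟨m, hm, hin, hout⟩ := hp.exists_crossing subset_forestVertices hw
  calc lab (e i).1 (e i).2 ≤ lab p[m] p[m + 1] :=
        run.lab_le i _ _
          (run.isExtensionEdge_of_crossing (fun j hj _ _ => ih j hj) hp hm hin hout)
    _ ≤ arrivalTime lab p := hp.lab_le_arrivalTime hm

theorem mem_forestVertices_iff (run : IsForemostForestRun adj lab S e) (v : V) :
    v ∈ forestVertices S e k ↔ v ∈ S ∨ ∃ p, IsTPathFromTo adj lab S v p := by
  constructor
  · rintro (hS | ⟨i, -, rfl⟩)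
    · exact .inl hS
    · obtain ⟨p, hp, -⟩ := run.exists_isTPathFromTo i
      exact .inr ⟨p, hp⟩
  · rintro (hS | ⟨p, hp⟩)
    · exact subset_forestVertices hS
    by_contra hv
    obtain ⟨m, hm, hin, hout⟩ := hp.exists_crossing subset_forestVertices hv
    exact run.not_isExtensionEdge _ _
      (run.isExtensionEdge_of_crossing (fun j _ _ _ => run.lab_le_arrivalTime j) hp hm hin hout)

end IsForemostForestRun

end ForemostForest

/-- The run of the algorithm is encoded by the sequence `e` of the edges it adds, forest endpoint
first, and `reached j` is the vertex set of the forest after `j` steps. -/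
theorem foremost_forest_correct_general
    {V : Type*}
    (adj : V → V → Prop)
    (lab : V → V → ℝ)
    (S : Finset V) (k : ℕ) (e : Fin k → V × V)
    (reached : ℕ → Set V)
    (hreached : ∀ j, reached j = ↑S ∪ {v | ∃ i : Fin k, (i : ℕ) < j ∧ (e i).2 = v})
    (hstep : ∀ i : Fin k,
      (e i).1 ∈ reached i ∧ (e i).2 ∉ reached i ∧ adj (e i).1 (e i).2)
    (hext : ∀ i : Fin k, (e i).1 ∈ S ∨ ∃ j : Fin k, (j : ℕ) < (i : ℕ) ∧
      (e j).2 = (e i).1 ∧ lab (e j).1 (e j).2 < lab (e i).1 (e i).2)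
    (hmin : ∀ i : Fin k, ∀ u v : V, u ∈ reached i → v ∉ reached i → adj u v →
      (u ∈ S ∨ ∃ j : Fin k, (j : ℕ) < (i : ℕ) ∧ (e j).2 = u ∧
        lab (e j).1 (e j).2 < lab u v) →
      lab (e i).1 (e i).2 ≤ lab u v)
    (hterm : ∀ u v : V, u ∈ reached k → v ∉ reached k → adj u v →
      ¬ (u ∈ S ∨ ∃ j : Fin k, (e j).2 = u ∧ lab (e j).1 (e j).2 < lab u v)) :
    (∀ i : Fin k,
      (∃ p : List V, ∃ hp : p ≠ [], IsTPath adj lab p ∧ 2 ≤ p.length ∧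
        p.head hp ∈ S ∧ p.getLast hp = (e i).2 ∧
        arrivalTime lab p = lab (e i).1 (e i).2) ∧
      (∀ p : List V, ∀ hp : p ≠ [], IsTPath adj lab p → 2 ≤ p.length →
        p.head hp ∈ S → p.getLast hp = (e i).2 →
        lab (e i).1 (e i).2 ≤ arrivalTime lab p)) ∧
    (∀ v : V, ReachesFrom adj lab S v ↔ v ∈ reached k) := by
  obtain rfl : reached = forestVertices (↑S) e := funext hreached
  have run : IsForemostForestRun adj lab (↑S) e :=
    { isExtensionEdge := fun i => ⟨(hstep i).1, (hstep i).2.1, (hstep i).2.2, hext i⟩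
      lab_le := fun i u v ⟨hu, hv, huv, hlt⟩ => hmin i u v hu hv huv hlt
      not_isExtensionEdge := fun u v ⟨hu, hv, huv, hlt⟩ =>
        hterm u v hu hv huv (hlt.imp_right fun ⟨j, _, hj⟩ => ⟨j, hj⟩) }
  refine ⟨fun i => ⟨?_, fun p hp hT hlen hhead hlast => ?_⟩,
    fun v => (run.mem_forestVertices_iff v).symm⟩
  · obtain ⟨p, ⟨hp, hT, hlen, hhead, hlast⟩, harr⟩ := run.exists_isTPathFromTo i
    exact ⟨p, hp, hT, hlen, hhead, hlast, harr⟩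
  · exact run.lab_le_arrivalTime i ⟨hp, hT, hlen, hhead, hlast⟩
      (hlast ▸ (run.isExtensionEdge i).2.1)

/-- Correctness of the Foremost Forest algorithm: its output is a foremost forest
for `S`, i.e., every vertex added to the forest is reached from `S` by a temporal
path arriving exactly at the label of its forest edge, no temporal path from `S`
arrives at it strictly earlier, and the vertex set of the output forest is exactly
the set of vertices temporally reachable from `S`.

The run of the algorithm on a simple temporal graph `(adj, lab)` (symmetric
adjacency, symmetric labels that are distinct across edges) with source set `S`
is encoded by the sequence `e : Fin k → V × V` of the edges it adds (as ordered
pairs, forest endpoint first), with `reached j` the vertex set of the forest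
after `j` steps. The hypotheses state: each added edge extends the forest
(`hstep`), keeps the forest an increasing temporal forest (`hext`), has minimum
label among all such extension edges (`hmin`), and the algorithm stops only when
no extension edge remains (`hterm`). -/
theorem foremost_forest_correct
    {V : Type*} [Fintype V] [DecidableEq V]
    (adj : V → V → Prop) (hadj : Symmetric adj)
    (lab : V → V → ℝ) (hlab : ∀ u v, lab u v = lab v u)
    (hdistinct : ∀ u v x y, adj u v → adj x y → lab u v = lab x y →
      (u = x ∧ v = y) ∨ (u = y ∧ v = x))
    (S : Finset V) (k : ℕ) (e : Fin k → V × V)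
    (reached : ℕ → Set V)
    (hreached : ∀ j, reached j = ↑S ∪ {v | ∃ i : Fin k, (i : ℕ) < j ∧ (e i).2 = v})
    (hstep : ∀ i : Fin k,
      (e i).1 ∈ reached i ∧ (e i).2 ∉ reached i ∧ adj (e i).1 (e i).2)
    (hext : ∀ i : Fin k, (e i).1 ∈ S ∨ ∃ j : Fin k, (j : ℕ) < (i : ℕ) ∧
      (e j).2 = (e i).1 ∧ lab (e j).1 (e j).2 < lab (e i).1 (e i).2)
    (hmin : ∀ i : Fin k, ∀ u v : V, u ∈ reached i → v ∉ reached i → adj u v →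
      (u ∈ S ∨ ∃ j : Fin k, (j : ℕ) < (i : ℕ) ∧ (e j).2 = u ∧
        lab (e j).1 (e j).2 < lab u v) →
      lab (e i).1 (e i).2 ≤ lab u v)
    (hterm : ∀ u v : V, u ∈ reached k → v ∉ reached k → adj u v →
      ¬ (u ∈ S ∨ ∃ j : Fin k, (e j).2 = u ∧ lab (e j).1 (e j).2 < lab u v)) :
    (∀ i : Fin k,
      (∃ p : List V, ∃ hp : p ≠ [], IsTPath adj lab p ∧ 2 ≤ p.length ∧
        p.head hp ∈ S ∧ p.getLast hp = (e i).2 ∧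
        arrivalTime lab p = lab (e i).1 (e i).2) ∧
      (∀ p : List V, ∀ hp : p ≠ [], IsTPath adj lab p → 2 ≤ p.length →
        p.head hp ∈ S → p.getLast hp = (e i).2 →
        lab (e i).1 (e i).2 ≤ arrivalTime lab p)) ∧
    (∀ v : V, ReachesFrom adj lab S v ↔ v ∈ reached k) :=
  foremost_forest_correct_general adj lab S k e reached hreached hstep hext hmin hterm
end

section
/- In the Foremost Forest algorithm run on a simple temporal graph with source set S, the time labels of the edges added by the algorithm are non-decreasing in the order in which they are added: λ(e_{|S|}) ≤ λ(e_{|S|+1}) ≤ ⋯ ≤ λ(e_k). -/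
namespace ForemostForest

variable {V : Type*} {k : ℕ}

/-- Only the last forest edge into `u` needs checking, since the forest path to `u` is already
increasing. -/
def IsIncreasingExtension (lab : V → V → ℝ) (S : Set V) (e : Fin k → V × V) (i : ℕ)
    (u v : V) : Prop :=
  u ∈ S ∨ ∃ j : Fin k, (j : ℕ) < i ∧ (e j).2 = u ∧ lab (e j).1 (e j).2 < lab u v

structure IsRun (adj : V → V → Prop) (lab : V → V → ℝ) (S : Set V)
    (e : Fin k → V × V) (reached : ℕ → Set V) : Prop where
  reached_eq : ∀ j, reached j = S ∪ {v | ∃ i : Fin k, (i : ℕ) < j ∧ (e i).2 = v}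
  notMem_reached : ∀ i : Fin k, (e i).2 ∉ reached i
  adj_edge : ∀ i : Fin k, adj (e i).1 (e i).2
  isIncreasingExtension_edge : ∀ i : Fin k, IsIncreasingExtension lab S e i (e i).1 (e i).2
  label_le : ∀ i : Fin k, ∀ u v, u ∈ reached i → v ∉ reached i → adj u v →
    IsIncreasingExtension lab S e i u v → lab (e i).1 (e i).2 ≤ lab u v

variable {lab : V → V → ℝ} {S : Set V} {e : Fin k → V × V}

theorem IsIncreasingExtension.of_add_one {i : Fin k} {u v : V}
    (h : IsIncreasingExtension lab S e ((i : ℕ) + 1) u v) :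
    IsIncreasingExtension lab S e i u v ∨ lab (e i).1 (e i).2 < lab u v := by
  rcases h with hS | ⟨j, hj, hju, hlt⟩
  · exact Or.inl (Or.inl hS)
  · rcases Nat.lt_succ_iff_lt_or_eq.1 hj with hji | hji
    · exact Or.inl (Or.inr ⟨j, hji, hju, hlt⟩)
    · exact Or.inr (Fin.ext hji ▸ hlt)

namespace IsRun

variable {adj : V → V → Prop} {reached : ℕ → Set V}

theorem reached_mono (h : IsRun adj lab S e reached) : Monotone reached := by
  intro a b hab
  rw [h.reached_eq, h.reached_eq]
  exact Set.union_subset_union_right _ fun v ⟨i, hi, hv⟩ => ⟨i, hi.trans_le hab, hv⟩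

theorem mem_reached_of_isIncreasingExtension (h : IsRun adj lab S e reached)
    {i : ℕ} {u v : V} (huv : IsIncreasingExtension lab S e i u v) : u ∈ reached i := by
  rw [h.reached_eq]
  rcases huv with hS | ⟨j, hj, rfl, -⟩
  · exact Or.inl hS
  · exact Or.inr ⟨j, hj, rfl⟩

theorem label_le_of_add_one_eq (h : IsRun adj lab S e reached) {i j : Fin k}
    (hij : (i : ℕ) + 1 = j) : lab (e i).1 (e i).2 ≤ lab (e j).1 (e j).2 := by
  have hext := h.isIncreasingExtension_edge j
  rw [← hij] at hext
  rcases hext.of_add_one with hcand | hlt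
  · have hv : (e j).2 ∉ reached i := fun hv =>
      h.notMem_reached j (h.reached_mono (by omega) hv)
    exact h.label_le i _ _ (h.mem_reached_of_isIncreasingExtension hcand) hv (h.adj_edge j) hcand
  · exact hlt.le

theorem label_monotone (h : IsRun adj lab S e reached) :
    Monotone fun i => lab (e i).1 (e i).2 :=
  monotone_of_le_succ fun _ hi =>
    h.label_le_of_add_one_eq <|
      Nat.covBy_iff_add_one_eq.1 (Fin.covBy_iff.1 (Order.covBy_succ_of_not_isMax hi))

end IsRun

end ForemostForest

/-- The run is encoded by the sequence `e` of added edges, oriented with the forest endpoint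
first, and `reached j` is the vertex set of the forest after `j` steps. -/
theorem foremost_forest_labels_monotone_general
    {V : Type*}
    (adj : V → V → Prop)
    (lab : V → V → ℝ)
    (S : Finset V) (k : ℕ) (e : Fin k → V × V)
    (reached : ℕ → Set V)
    (hreached : ∀ j, reached j = ↑S ∪ {v | ∃ i : Fin k, (i : ℕ) < j ∧ (e i).2 = v})
    (hstep : ∀ i : Fin k,
      (e i).1 ∈ reached i ∧ (e i).2 ∉ reached i ∧ adj (e i).1 (e i).2)
    (hext : ∀ i : Fin k, (e i).1 ∈ S ∨ ∃ j : Fin k, (j : ℕ) < (i : ℕ) ∧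
      (e j).2 = (e i).1 ∧ lab (e j).1 (e j).2 < lab (e i).1 (e i).2)
    (hmin : ∀ i : Fin k, ∀ u v : V, u ∈ reached i → v ∉ reached i → adj u v →
      (u ∈ S ∨ ∃ j : Fin k, (j : ℕ) < (i : ℕ) ∧ (e j).2 = u ∧
        lab (e j).1 (e j).2 < lab u v) →
      lab (e i).1 (e i).2 ≤ lab u v) :
    ∀ i j : Fin k, i ≤ j → lab (e i).1 (e i).2 ≤ lab (e j).1 (e j).2 :=
  have hrun : ForemostForest.IsRun adj lab (↑S) e reached :=
    ⟨hreached, fun i => (hstep i).2.1, fun i => (hstep i).2.2, hext, hmin⟩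
  fun _ _ hij => hrun.label_monotone hij

/-- In the Foremost Forest algorithm, the time labels of the edges added by the
algorithm are non-decreasing in the order in which they are added.

The run of the algorithm on a simple temporal graph `(adj, lab)` (symmetric
adjacency, symmetric labels that are distinct across edges) with source set `S`
is encoded by the sequence `e : Fin k → V × V` of the edges it adds (as ordered
pairs, forest endpoint first), with `reached j` the vertex set of the forest
after `j` steps. The hypotheses state: each added edge extends the forest
(`hstep`), keeps the forest an increasing temporal forest (`hext`), and has
minimum label among all such extension edges (`hmin`). -/
theorem foremost_forest_labels_monotone
    {V : Type*} [Fintype V] [DecidableEq V]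
    (adj : V → V → Prop) (hadj : Symmetric adj)
    (lab : V → V → ℝ) (hlab : ∀ u v, lab u v = lab v u)
    (hdistinct : ∀ u v x y, adj u v → adj x y → lab u v = lab x y →
      (u = x ∧ v = y) ∨ (u = y ∧ v = x))
    (S : Finset V) (k : ℕ) (e : Fin k → V × V)
    (reached : ℕ → Set V)
    (hreached : ∀ j, reached j = ↑S ∪ {v | ∃ i : Fin k, (i : ℕ) < j ∧ (e i).2 = v})
    (hstep : ∀ i : Fin k,
      (e i).1 ∈ reached i ∧ (e i).2 ∉ reached i ∧ adj (e i).1 (e i).2)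
    (hext : ∀ i : Fin k, (e i).1 ∈ S ∨ ∃ j : Fin k, (j : ℕ) < (i : ℕ) ∧
      (e j).2 = (e i).1 ∧ lab (e j).1 (e j).2 < lab (e i).1 (e i).2)
    (hmin : ∀ i : Fin k, ∀ u v : V, u ∈ reached i → v ∉ reached i → adj u v →
      (u ∈ S ∨ ∃ j : Fin k, (j : ℕ) < (i : ℕ) ∧ (e j).2 = u ∧
        lab (e j).1 (e j).2 < lab u v) →
      lab (e i).1 (e i).2 ≤ lab u v) :
    ∀ i j : Fin k, i ≤ j → lab (e i).1 (e i).2 ≤ lab (e j).1 (e j).2 :=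
  foremost_forest_labels_monotone_general adj lab S k e reached hreached hstep hext hmin
end
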